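/- For every real 2×2 matrix A with trace A = 0, the trace of the matrix exponential exp(A) is at least -2. -/

import Mathlib

/-!
By Cayley–Hamilton a trace-zero `2 × 2` matrix satisfies `A ^ 2 = δ • 1` with `δ = -det A`, so the
odd powers of `A` are traceless and `trace (exp A) = 2 ∑ δ ^ m / (2m)!`. For `δ ≥ 0` every term is
nonnegative, and for `δ = -r ^ 2 < 0` the series is `cos r ≥ -1`.
-/

open Matrix Nat NormedSpace

theorem Matrix.mul_self_fin_two {R : Type*} [CommRing R] (A : Matrix (Fin 2) (Fin 2) R) :
    A * A = A.trace • A - A.det • 1 := by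
  ext i j
  fin_cases i <;> fin_cases j <;> simp [mul_apply, trace_fin_two, det_fin_two] <;> ring

theorem Matrix.exp_series_hasSum_exp' {𝕂 n : Type*} [RCLike 𝕂] [Fintype n] [DecidableEq n]
    (A : Matrix n n 𝕂) : HasSum (fun k => (k ! : 𝕂)⁻¹ • A ^ k) (exp A) := by
  let _ : NormedRing (Matrix n n 𝕂) := Matrix.linftyOpNormedRing
  let _ : NormedAlgebra 𝕂 (Matrix n n 𝕂) := Matrix.linftyOpNormedAlgebra
  -- the `L∞` operator norm is not reducibly the product uniformity, so completeness is given by hand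
  exact @NormedSpace.exp_series_hasSum_exp' 𝕂 _ _ _ _ _ _ (FiniteDimensional.complete 𝕂 _) A

theorem Matrix.hasSum_trace_exp {𝕂 n : Type*} [RCLike 𝕂] [Fintype n] [DecidableEq n]
    (A : Matrix n n 𝕂) : HasSum (fun k => (A ^ k).trace / k !) (exp A).trace := by
  simpa [Function.comp_def, trace_smul, div_eq_inv_mul] using
    (exp_series_hasSum_exp' A).map (traceLinearMap n 𝕂 𝕂) continuous_id.matrix_trace

theorem Matrix.hasSum_trace_exp_of_trace_eq_zero {A : Matrix (Fin 2) (Fin 2) ℝ}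
    (hA : A.trace = 0) :
    HasSum (fun m : ℕ => 2 * ((-A.det) ^ m / (2 * m)!)) (exp A).trace := by
  have hA2 : A ^ 2 = (-A.det) • 1 := by
    rw [sq, mul_self_fin_two, hA, zero_smul, zero_sub, neg_smul]
  have hodd : ∀ k ∉ Set.range (2 * ·), (A ^ k).trace / k ! = 0 := by
    intro k hk
    obtain ⟨m, rfl⟩ : Odd k := by simpa [← even_iff_exists_two_mul] using hk
    rw [pow_succ, pow_mul, hA2, smul_pow, one_pow, smul_mul, one_mul, trace_smul, hA,
      smul_zero, zero_div]
  convert ((mul_right_injective₀ two_ne_zero).hasSum_iff hodd).2 (hasSum_trace_exp A) using 2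
  rw [Function.comp_apply, pow_mul, hA2, smul_pow, one_pow, trace_smul, trace_one,
    Fintype.card_fin, smul_eq_mul]
  push_cast
  ring

theorem neg_one_le_of_hasSum_pow_div_factorial_two_mul {d c : ℝ}
    (h : HasSum (fun m : ℕ => d ^ m / (2 * m)!) c) : -1 ≤ c := by
  rcases le_total 0 d with hd | hd
  · linarith [h.nonneg fun m => by positivity]
  · obtain ⟨r, rfl⟩ : ∃ r, d = -r ^ 2 := ⟨√(-d), by rw [Real.sq_sqrt (neg_nonneg.2 hd), neg_neg]⟩
    have hcos : HasSum (fun m : ℕ => (-r ^ 2) ^ m / (2 * m)!) (Real.cos r) := by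
      convert Real.hasSum_cos r using 2 with m
      rw [neg_pow, pow_mul]
    rw [h.unique hcos]
    exact Real.neg_one_le_cos r

/-- For every real 2×2 matrix `A` with trace zero, the trace of `exp A` is at least `-2`. -/
theorem stmt_1 (A : Matrix (Fin 2) (Fin 2) ℝ) (hA : A.trace = 0) :
    -2 ≤ (NormedSpace.exp A).trace := by
  have h := (hasSum_trace_exp_of_trace_eq_zero hA).div_const 2
  simp only [mul_div_cancel_left₀ _ (two_ne_zero' ℝ)] at h
  linarith [neg_one_le_of_hasSum_pow_div_factorial_two_mul h]
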